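/- Let M ≥ 1, let A ∈ ℂ^{M×M} be Hermitian positive semidefinite with spectral decomposition A = U^H Λ U, where U is unitary and Λ = diag(λ_1, …, λ_M) with λ_1 ≤ λ_2 ≤ … ≤ λ_M (so λ_1 is the minimum eigenvalue). Let ρ > 0 and suppose the first row of U has no zero entry, i.e. U_{1k} ≠ 0 for all k. Then for every k ∈ {1,…,M}: 1/[(I + ρ A)^{-1}]_{kk} ≤ (1 + ρ λ_1) / |U_{1k}|², and consequently (1/M) ∑_{k=1}^M 1/[(I + ρ A)^{-1}]_{kk} ≤ (1 + ρ λ_1) · (1/M) ∑_{k=1}^M 1/|U_{1k}|². -/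

import Mathlib

open Matrix
open scoped ComplexOrder

/-!
Diagonalising, `(I + ρA)⁻¹ = Uᴴ diag((1 + ρλ_ℓ)⁻¹) U`, so its `k`-th diagonal entry is
`∑_ℓ |U_{ℓk}|² / (1 + ρλ_ℓ)`. All terms are nonnegative because `A ⪰ 0` forces `λ_ℓ ≥ 0`, so the
entry is at least its `ℓ = 1` term `|U_{1k}|² / (1 + ρλ_1)`; inverting and averaging over `k` gives
both bounds.
-/

namespace Matrix

variable {n : Type*} [Fintype n] [DecidableEq n]

theorem inv_diagonal_of_ne_zero {K : Type*} [Field K] {d : n → K} (hd : ∀ i, d i ≠ 0) :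
    (diagonal d)⁻¹ = diagonal d⁻¹ := by
  refine inv_eq_left_inv ?_
  rw [diagonal_mul_diagonal, ← diagonal_one]
  exact congrArg diagonal (funext fun i => inv_mul_cancel₀ (hd i))

section CommRing

variable {R : Type*} [CommRing R] [StarRing R] {U : Matrix n n R}

theorem inv_conjTranspose_mul_mul_of_mem_unitaryGroup (hU : U ∈ unitaryGroup n R)
    (D : Matrix n n R) : (Uᴴ * D * U)⁻¹ = Uᴴ * D⁻¹ * U := by
  rw [Matrix.mul_inv_rev, Matrix.mul_inv_rev, inv_eq_left_inv (show Uᴴ * U = 1 from hU.1),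
    inv_eq_left_inv (show U * Uᴴ = 1 from hU.2), Matrix.mul_assoc]

theorem one_add_smul_conjTranspose_mul_diagonal_mul (hU : U ∈ unitaryGroup n R) (c : R)
    (d : n → R) :
    1 + c • (Uᴴ * diagonal d * U) = Uᴴ * diagonal (fun i => 1 + c * d i) * U := by
  have hdiag : diagonal (fun i => 1 + c * d i) = 1 + c • diagonal d := by
    rw [← diagonal_one, ← diagonal_smul, diagonal_add]; rfl
  rw [hdiag, Matrix.mul_add, Matrix.add_mul, Matrix.mul_one, Matrix.mul_smul, Matrix.smul_mul,
    show Uᴴ * U = 1 from hU.1]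

end CommRing

variable {𝕜 : Type*} [RCLike 𝕜] {U : Matrix n n 𝕜}

theorem conjTranspose_mul_diagonal_mul_apply_self (d : n → 𝕜) (k : n) :
    (Uᴴ * diagonal d * U) k k = ∑ ℓ, d ℓ * (‖U ℓ k‖ ^ 2 : ℝ) := by
  rw [Matrix.mul_assoc, mul_apply]
  refine Finset.sum_congr rfl fun ℓ _ => ?_
  rw [diagonal_mul, conjTranspose_apply, RCLike.ofReal_pow, ← RCLike.conj_mul, RCLike.star_def]
  ring

theorem nonneg_of_posSemidef_conjTranspose_mul_diagonal_mul (hU : U ∈ unitaryGroup n 𝕜)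
    {d : n → ℝ} (hA : (Uᴴ * diagonal (fun i => (d i : 𝕜)) * U).PosSemidef) (i : n) :
    0 ≤ d i := by
  have hD := hA.mul_mul_conjTranspose_same U
  rw [← Matrix.mul_assoc, ← Matrix.mul_assoc, show U * Uᴴ = 1 from hU.2, Matrix.one_mul,
    Matrix.mul_assoc, show U * Uᴴ = 1 from hU.2, Matrix.mul_one] at hD
  exact RCLike.ofReal_nonneg.mp (posSemidef_diagonal_iff.mp hD i)

theorem le_re_conjTranspose_mul_diagonal_mul_apply_self {d : n → ℝ} (hd : 0 ≤ d) (ℓ k : n) :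
    d ℓ * ‖U ℓ k‖ ^ 2 ≤ RCLike.re ((Uᴴ * diagonal (fun i => (d i : 𝕜)) * U) k k) := by
  rw [conjTranspose_mul_diagonal_mul_apply_self, map_sum]
  simp_rw [← RCLike.ofReal_mul, RCLike.ofReal_re]
  exact Finset.single_le_sum (f := fun ℓ => d ℓ * ‖U ℓ k‖ ^ 2)
    (fun ℓ _ => mul_nonneg (hd ℓ) (sq_nonneg _)) (Finset.mem_univ ℓ)

end Matrix

theorem stmt_4_general (m : ℕ) (A : Matrix (Fin (m + 1)) (Fin (m + 1)) ℂ) (hA : A.PosSemidef)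
    (U : Matrix (Fin (m + 1)) (Fin (m + 1)) ℂ) (hU : Uᴴ * U = 1 ∧ U * Uᴴ = 1)
    (lam : Fin (m + 1) → ℝ)
    (hdec : A = Uᴴ * Matrix.diagonal (fun ℓ => (lam ℓ : ℂ)) * U)
    (ρ : ℝ) (hρ : 0 < ρ) (hU0 : ∀ k, U 0 k ≠ 0) :
    (∀ k, 1 / ((((1 + (ρ : ℂ) • A)⁻¹ : Matrix (Fin (m + 1)) (Fin (m + 1)) ℂ) k k).re) ≤
        (1 + ρ * lam 0) / ‖U 0 k‖ ^ 2) ∧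
      (1 / (m + 1 : ℝ)) *
          ∑ k, 1 / ((((1 + (ρ : ℂ) • A)⁻¹ : Matrix (Fin (m + 1)) (Fin (m + 1)) ℂ) k k).re) ≤
        (1 + ρ * lam 0) * ((1 / (m + 1 : ℝ)) * ∑ k, 1 / ‖U 0 k‖ ^ 2) := by
  have hUu : U ∈ unitaryGroup (Fin (m + 1)) ℂ := hU
  have hlam := nonneg_of_posSemidef_conjTranspose_mul_diagonal_mul hUu (hdec ▸ hA)
  have hμ : ∀ ℓ, 0 < 1 + ρ * lam ℓ := fun ℓ => by have := hlam ℓ; positivity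
  have hinv : (1 + (ρ : ℂ) • A)⁻¹ =
      Uᴴ * diagonal (fun ℓ => (((1 + ρ * lam ℓ)⁻¹ : ℝ) : ℂ)) * U := by
    rw [hdec, one_add_smul_conjTranspose_mul_diagonal_mul hUu,
      inv_conjTranspose_mul_mul_of_mem_unitaryGroup hUu,
      inv_diagonal_of_ne_zero fun ℓ => by exact_mod_cast (hμ ℓ).ne']
    push_cast
    rfl
  have key : ∀ k, 1 / ((((1 + (ρ : ℂ) • A)⁻¹ : Matrix (Fin (m + 1)) (Fin (m + 1)) ℂ) k k).re) ≤
      (1 + ρ * lam 0) / ‖U 0 k‖ ^ 2 := fun k => by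
    have hlow : (1 + ρ * lam 0)⁻¹ * ‖U 0 k‖ ^ 2 ≤ ((1 + (ρ : ℂ) • A)⁻¹ k k).re := by
      rw [hinv]
      exact le_re_conjTranspose_mul_diagonal_mul_apply_self (fun ℓ => (inv_pos.mpr (hμ ℓ)).le) 0 k
    have hU0k : 0 < ‖U 0 k‖ := norm_pos_iff.mpr (hU0 k)
    calc _ ≤ 1 / ((1 + ρ * lam 0)⁻¹ * ‖U 0 k‖ ^ 2) :=
          one_div_le_one_div_of_le (mul_pos (inv_pos.mpr (hμ 0)) (pow_pos hU0k 2)) hlow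
      _ = _ := by rw [one_div, mul_inv, inv_inv, div_eq_mul_inv]
  refine ⟨key, ?_⟩
  calc _ ≤ (1 / (m + 1 : ℝ)) * ∑ k, (1 + ρ * lam 0) / ‖U 0 k‖ ^ 2 :=
        mul_le_mul_of_nonneg_left (Finset.sum_le_sum fun k _ => key k) (by positivity)
    _ = _ := by simp_rw [Finset.mul_sum]; ring_nf

/-- Let `A = Uᴴ Λ U` be Hermitian positive semidefinite, `U` unitary,
`Λ = diag(λ_1 ≤ … ≤ λ_M)` (here indexed by `Fin (m+1)`, with `lam` monotone so `lam 0` is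
the minimum eigenvalue), `ρ > 0`, and suppose `U_{1k} ≠ 0` for all `k`.  Then for every `k`,
`1/[(I + ρ A)⁻¹]_{kk} ≤ (1 + ρ λ_1)/|U_{1k}|²`, and consequently
`(1/M) ∑ₖ 1/[(I + ρ A)⁻¹]_{kk} ≤ (1 + ρ λ_1) (1/M) ∑ₖ 1/|U_{1k}|²`. -/
theorem stmt_4 (m : ℕ) (A : Matrix (Fin (m + 1)) (Fin (m + 1)) ℂ) (hA : A.PosSemidef)
    (U : Matrix (Fin (m + 1)) (Fin (m + 1)) ℂ) (hU : Uᴴ * U = 1 ∧ U * Uᴴ = 1)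
    (lam : Fin (m + 1) → ℝ) (hmono : Monotone lam)
    (hdec : A = Uᴴ * Matrix.diagonal (fun ℓ => (lam ℓ : ℂ)) * U)
    (ρ : ℝ) (hρ : 0 < ρ) (hU0 : ∀ k, U 0 k ≠ 0) :
    (∀ k, 1 / ((((1 + (ρ : ℂ) • A)⁻¹ : Matrix (Fin (m + 1)) (Fin (m + 1)) ℂ) k k).re) ≤
        (1 + ρ * lam 0) / ‖U 0 k‖ ^ 2) ∧
      (1 / (m + 1 : ℝ)) *
          ∑ k, 1 / ((((1 + (ρ : ℂ) • A)⁻¹ : Matrix (Fin (m + 1)) (Fin (m + 1)) ℂ) k k).re) ≤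
        (1 + ρ * lam 0) * ((1 / (m + 1 : ℝ)) * ∑ k, 1 / ‖U 0 k‖ ^ 2) :=
  stmt_4_general m A hA U hU lam hdec ρ hρ hU0
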